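/- For every amplitude A > 0, width L > 0, and scale α > 0, there exists a shape parameter β > 0 such that the L¹ approximation error of the square wave by the generalized exponential function is strictly smaller than that by the scaled Gaussian: ∫_ℝ |S(t) − A·e^{−(|t|/α)^β}| dt < ∫_ℝ |S(t) − A·e^{−t²/α²}| dt. -/

import Mathlib

open MeasureTheory Real Set Topology

/-!
For `0 ≤ g ≤ 1` the L¹ distance between the indicator of `s = (-c, c)` and `g` is
`|s| + ∫ g - 2 ∫_s g`, and `∫ exp (-(|t|/α)^p) dt = 2 α Γ(1/p + 1)`.

If `c ≤ α`, take `p` slightly above `2`. Since `Γ'(3/2) = √π (1 - (γ + 2 log 2)/2) > 0`, the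
total mass `2 α Γ(1/p + 1)` drops below the Gaussian's `2 α Γ(3/2)`, while on `s ⊆ [-α, α]` the
GEF dominates the Gaussian, so `∫_s g` does not drop.

If `α ≤ c`, take `p = 150`: the GEF is then close to the indicator of `[-α, α] ⊆ s̄`, with total
mass at most `2α` (as `Γ ≤ 1` on `[1, 2]`) and mass at least `(48/25) α (1 - (24/25)^150)` on `s`,
whereas for the Gaussian `∫ g - 2 ∫_s g ≥ -∫ g = -√π α`.
-/

namespace Real

theorem eulerMascheroniConstant_add_two_mul_log_two_lt_two :
    eulerMascheroniConstant + 2 * log 2 < 2 := by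
  have hγ := eulerMascheroniConstant_lt_eulerMascheroniSeq' 16
  have hseq : eulerMascheroniSeq' 16 = 2436559 / 720720 - 4 * log 2 := by
    rw [eulerMascheroniSeq', if_neg (by norm_num), Nat.cast_ofNat,
      show (16 : ℝ) = 2 ^ 4 by norm_num, log_pow]
    norm_num [harmonic_succ]
  linarith [log_two_gt_d9]

theorem hasDerivAt_Gamma_add_one {x g' : ℝ} (hx : 0 < x) (h : HasDerivAt Gamma g' x) :
    HasDerivAt Gamma (Gamma x + x * g') (x + 1) := by
  have hmul : HasDerivAt (fun y => y * Gamma y) (1 * Gamma x + x * g') x :=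
    (hasDerivAt_id x).mul h
  have hshift : HasDerivAt (fun y => Gamma (y + 1)) (Gamma x + x * g') x := by
    refine (one_mul (Gamma x) ▸ hmul).congr_of_eventuallyEq ?_
    filter_upwards [eventually_gt_nhds hx] with y hy
    exact Gamma_add_one hy.ne'
  rw [← add_sub_cancel_right x 1] at hshift
  simpa using hshift.comp_sub_const (x + 1) 1

theorem exists_Gamma_lt_Gamma_three_halves :
    ∃ y ∈ Ioo 1 (3 / 2), Gamma y < Gamma (3 / 2) := by
  have hderiv := hasDerivAt_Gamma_add_one one_half_pos hasDerivAt_Gamma_one_half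
  rw [Gamma_one_half_eq, show (1 / 2 + 1 : ℝ) = 3 / 2 by norm_num] at hderiv
  have hpos : 0 < √π + 1 / 2 * (-√π * (eulerMascheroniConstant + 2 * log 2)) := by
    nlinarith [eulerMascheroniConstant_add_two_mul_log_two_lt_two, sqrt_pos.2 pi_pos]
  have hslope := (hasDerivAt_iff_tendsto_slope_left_right.1 hderiv).1.eventually
    (eventually_gt_nhds hpos)
  have hnear : ∀ᶠ y in 𝓝[<] (3 / 2 : ℝ), 1 < y ∧ y < 3 / 2 :=
    ((eventually_gt_nhds (by norm_num)).filter_mono nhdsWithin_le_nhds).and self_mem_nhdsWithin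
  obtain ⟨y, hy, hy1, hy2⟩ := (hslope.and hnear).exists
  exact ⟨y, ⟨hy1, hy2⟩, (slope_pos_iff_gt hy2).1 hy⟩

theorem exists_two_lt_Gamma_one_div_add_one_lt :
    ∃ p, 2 < p ∧ Gamma (1 / p + 1) < Gamma (1 / 2 + 1) := by
  obtain ⟨y, ⟨hy1, hy2⟩, hy⟩ := exists_Gamma_lt_Gamma_three_halves
  refine ⟨1 / (y - 1), ?_, ?_⟩
  · rw [lt_one_div two_pos (by linarith)]
    linarith
  · rwa [one_div_one_div, sub_add_cancel, show (1 / 2 + 1 : ℝ) = 3 / 2 by norm_num]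

theorem Gamma_add_one_le_one {x : ℝ} (h0 : 0 ≤ x) (h1 : x ≤ 1) : Gamma (x + 1) ≤ 1 :=
  calc Gamma (x + 1) = Gamma ((1 - x) • 1 + x • 2) := by simp only [smul_eq_mul]; ring_nf
    _ ≤ (1 - x) • Gamma 1 + x • Gamma 2 :=
      convexOn_Gamma.2 (mem_Ioi.2 one_pos) (mem_Ioi.2 two_pos) (sub_nonneg.2 h1) h0
        (sub_add_cancel 1 x)
    _ = 1 := by simp only [Gamma_one, Gamma_two, smul_eq_mul]; ring

end Real

theorem abs_indicator_one_sub_eq {X : Type*} (s : Set X) {g : X → ℝ} {x : X} (h0 : 0 ≤ g x)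
    (h1 : g x ≤ 1) : |s.indicator 1 x - g x| = s.indicator 1 x + g x - 2 * s.indicator g x := by
  by_cases hx : x ∈ s
  · simp only [indicator_of_mem hx, Pi.one_apply, abs_of_nonneg (sub_nonneg.2 h1)]
    ring
  · simp only [indicator_of_notMem hx, zero_sub, abs_neg, abs_of_nonneg h0]
    ring

theorem integral_abs_indicator_one_sub {X : Type*} [MeasurableSpace X] {μ : Measure X}
    {s : Set X} (hs : MeasurableSet s) (hμs : μ s ≠ ⊤) {g : X → ℝ} (hg : Integrable g μ)
    (hg0 : ∀ x, 0 ≤ g x) (hg1 : ∀ x, g x ≤ 1) :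
    ∫ x, |s.indicator 1 x - g x| ∂μ = μ.real s + ∫ x, g x ∂μ - 2 * ∫ x in s, g x ∂μ := by
  have hind : Integrable (s.indicator 1) μ :=
    (integrable_indicator_iff hs).2 (integrableOn_const (C := (1 : ℝ)) hμs)
  have hsum : Integrable (fun x => s.indicator 1 x + g x) μ := hind.add hg
  simp_rw [fun x => abs_indicator_one_sub_eq s (hg0 x) (hg1 x)]
  rw [integral_sub hsum ((hg.indicator hs).const_mul 2), integral_add hind hg,
    integral_const_mul, integral_indicator_one hs, integral_indicator hs]

noncomputable def squareWaveError (c : ℝ) (f : ℝ → ℝ) : ℝ :=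
  ∫ t, |(Ioo (-c) c).indicator 1 t - f t|

theorem integral_abs_squareWave_sub {A : ℝ} (hA : 0 ≤ A) (c : ℝ) (f : ℝ → ℝ) :
    ∫ t, |(if |t| < c then A else 0) - A * f t| = A * squareWaveError c f := by
  have hwave : ∀ t, (if |t| < c then A else 0) = A * (Ioo (-c) c).indicator 1 t := fun t => by
    simp [indicator_apply, abs_lt]
  simp_rw [hwave, ← mul_sub, abs_mul, abs_of_nonneg hA]
  exact integral_const_mul A _

theorem squareWaveError_lt_iff {c : ℝ} {f g : ℝ → ℝ} (hf : Integrable f) (hf0 : ∀ t, 0 ≤ f t)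
    (hf1 : ∀ t, f t ≤ 1) (hg : Integrable g) (hg0 : ∀ t, 0 ≤ g t) (hg1 : ∀ t, g t ≤ 1) :
    squareWaveError c f < squareWaveError c g ↔
      (∫ t, f t) - 2 * ∫ t in Ioo (-c) c, f t < (∫ t, g t) - 2 * ∫ t in Ioo (-c) c, g t := by
  rw [squareWaveError, squareWaveError,
    integral_abs_indicator_one_sub measurableSet_Ioo measure_Ioo_lt_top.ne hf hf0 hf1,
    integral_abs_indicator_one_sub measurableSet_Ioo measure_Ioo_lt_top.ne hg hg0 hg1]
  constructor <;> intro h <;> linarith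

noncomputable def gef (α p t : ℝ) : ℝ := exp (-((|t| / α) ^ p))

section Gef

variable {α p : ℝ}

theorem gef_pos (α p t : ℝ) : 0 < gef α p t := exp_pos _

theorem gef_le_one (hα : 0 ≤ α) (p t : ℝ) : gef α p t ≤ 1 :=
  exp_le_one_iff.2 (neg_nonpos.2 (rpow_nonneg (by positivity) p))

theorem gef_two (α t : ℝ) : gef α 2 t = exp (-(t ^ 2 / α ^ 2)) := by
  rw [gef, rpow_two, div_pow, sq_abs]

theorem integral_gef (hα : 0 < α) (hp : 0 < p) :
    ∫ t, gef α p t = 2 * α * Gamma (1 / p + 1) := by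
  have habs : ∀ t, |t| / α = |t / α| := fun t => by rw [abs_div, abs_of_pos hα]
  simp_rw [gef, habs]
  rw [Measure.integral_comp_div (fun u => exp (-(|u| ^ p))),
    integral_comp_abs (f := fun u => exp (-(u ^ p))), integral_exp_neg_rpow hp, abs_of_pos hα,
    smul_eq_mul]
  ring

theorem integrable_gef (hα : 0 < α) (hp : 0 < p) : Integrable (gef α p) :=
  Integrable.of_integral_ne_zero <| by
    rw [integral_gef hα hp]
    exact (mul_pos (mul_pos two_pos hα) (Gamma_pos_of_pos (by positivity))).ne'

theorem squareWaveError_gef_lt_iff {c q : ℝ} (hα : 0 < α) (hp : 0 < p) (hq : 0 < q) :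
    squareWaveError c (gef α p) < squareWaveError c (gef α q) ↔
      (∫ t, gef α p t) - 2 * ∫ t in Ioo (-c) c, gef α p t <
        (∫ t, gef α q t) - 2 * ∫ t in Ioo (-c) c, gef α q t :=
  squareWaveError_lt_iff (integrable_gef hα hp) (fun t => (gef_pos α p t).le)
    (gef_le_one hα.le p) (integrable_gef hα hq) (fun t => (gef_pos α q t).le) (gef_le_one hα.le q)

theorem gef_le_gef_of_abs_le {q t : ℝ} (ht : |t| ≤ α) (hp : 0 ≤ p) (hpq : p ≤ q) :
    gef α p t ≤ gef α q t := by
  have hα : 0 ≤ α := (abs_nonneg t).trans ht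
  exact exp_le_exp.2 <| neg_le_neg <| rpow_le_rpow_of_exponent_ge' (by positivity)
    (div_le_one_of_le₀ ht hα) hp hpq

theorem mul_one_sub_rpow_le_setIntegral_gef {q : ℝ} (hα : 0 < α) (hp : 0 < p) (hq : 0 ≤ q) :
    2 * (q * α) * (1 - q ^ p) ≤ ∫ t in Ioo (-(q * α)) (q * α), gef α p t := by
  have hvol : ∫ _ in Ioo (-(q * α)) (q * α), (1 - q ^ p) = 2 * (q * α) * (1 - q ^ p) := by
    rw [setIntegral_const, volume_real_Ioo, smul_eq_mul, sub_neg_eq_add, ← two_mul,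
      max_eq_left (by positivity)]
  rw [← hvol]
  refine setIntegral_mono_on (integrableOn_const measure_Ioo_lt_top.ne)
    (integrable_gef hα hp).integrableOn measurableSet_Ioo fun t ht => ?_
  have hratio : |t| / α ≤ q := (div_le_iff₀ hα).2 (abs_le.2 ⟨ht.1.le, ht.2.le⟩)
  calc 1 - q ^ p ≤ 1 - (|t| / α) ^ p := by gcongr
    _ ≤ gef α p t := by rw [gef]; linarith [add_one_le_exp (-((|t| / α) ^ p))]

end Gef

theorem exists_squareWaveError_gef_lt_gef_two_of_le {c α : ℝ} (hα : 0 < α) (hcα : c ≤ α) :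
    ∃ p, 0 < p ∧ squareWaveError c (gef α p) < squareWaveError c (gef α 2) := by
  obtain ⟨p, hp2, hΓ⟩ := exists_two_lt_Gamma_one_div_add_one_lt
  have hp : 0 < p := by linarith
  have hmass : ∫ t, gef α p t < ∫ t, gef α 2 t := by
    rw [integral_gef hα hp, integral_gef hα two_pos]
    gcongr
  have hmass_inside : ∫ t in Ioo (-c) c, gef α 2 t ≤ ∫ t in Ioo (-c) c, gef α p t :=
    setIntegral_mono_on (integrable_gef hα two_pos).integrableOn
      (integrable_gef hα hp).integrableOn measurableSet_Ioo fun t ht =>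
        gef_le_gef_of_abs_le ((abs_lt.2 ht).le.trans hcα) zero_le_two hp2.le
  exact ⟨p, hp, (squareWaveError_gef_lt_iff hα hp two_pos).2 (by linarith)⟩

theorem squareWaveError_gef_150_lt_gef_two_of_le {c α : ℝ} (hα : 0 < α) (hαc : α ≤ c) :
    squareWaveError c (gef α 150) < squareWaveError c (gef α 2) := by
  have hmass : ∫ t, gef α 150 t ≤ 2 * α := by
    rw [integral_gef hα (by norm_num)]
    nlinarith [Gamma_add_one_le_one (x := 1 / 150) (by norm_num) (by norm_num)]
  have hgauss : ∫ t, gef α 2 t = √π * α := by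
    rw [integral_gef hα two_pos, Gamma_add_one (by norm_num), Gamma_one_half_eq]
    ring
  have hsqrt_pi : √π < 9 / 5 := by
    rw [sqrt_lt' (by norm_num)]
    linarith [pi_lt_d2]
  have hpow : (24 / 25 : ℝ) ^ (150 : ℝ) < 1 / 400 := by
    rw [show (150 : ℝ) = (150 : ℕ) by norm_num, rpow_natCast]
    norm_num
  have hmass_inside : 2 * (24 / 25 * α) * (1 - (24 / 25 : ℝ) ^ (150 : ℝ)) ≤
      ∫ t in Ioo (-c) c, gef α 150 t :=
    (mul_one_sub_rpow_le_setIntegral_gef hα (by norm_num) (by norm_num)).trans <|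
      setIntegral_mono_set (integrable_gef hα (by norm_num)).integrableOn
        (ae_of_all _ fun t => (gef_pos α 150 t).le)
        (Ioo_subset_Ioo (by linarith) (by linarith)).eventuallyLE
  have hgauss_inside : ∫ t in Ioo (-c) c, gef α 2 t ≤ ∫ t, gef α 2 t :=
    setIntegral_le_integral (integrable_gef hα two_pos) (ae_of_all _ fun t => (gef_pos α 2 t).le)
  refine (squareWaveError_gef_lt_iff hα (by norm_num) two_pos).2 ?_
  nlinarith [mul_lt_mul_of_pos_left hpow hα, mul_lt_mul_of_pos_left hsqrt_pi hα]

theorem gef_beats_gaussian_on_square_wave_general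
    (A L α : ℝ) (hA : 0 < A) (hα : 0 < α) :
    ∃ β : ℝ, 0 < β ∧
      (∫ t : ℝ, |(if |t| < L / 2 then A else 0) - A * Real.exp (-((|t| / α) ^ β))|) <
      (∫ t : ℝ, |(if |t| < L / 2 then A else 0) - A * Real.exp (-(t ^ 2 / α ^ 2))|) := by
  obtain ⟨β, hβ, hlt⟩ : ∃ β, 0 < β ∧
      squareWaveError (L / 2) (gef α β) < squareWaveError (L / 2) (gef α 2) := by
    rcases le_total (L / 2) α with h | h
    · exact exists_squareWaveError_gef_lt_gef_two_of_le hα h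
    · exact ⟨150, by norm_num, squareWaveError_gef_150_lt_gef_two_of_le hα h⟩
  refine ⟨β, hβ, ?_⟩
  calc _ = A * squareWaveError (L / 2) (gef α β) := integral_abs_squareWave_sub hA.le _ _
    _ < A * squareWaveError (L / 2) (gef α 2) := mul_lt_mul_of_pos_left hlt hA
    _ = _ := by
      simp_rw [← gef_two]
      exact (integral_abs_squareWave_sub hA.le _ _).symm

/-- **GEF beats Gaussian on square waves.**
For every amplitude `A > 0`, width `L > 0`, and scale `α > 0`, there exists a shape
parameter `β > 0` such that the L¹ approximation error of the square wave
`S t = A` for `|t| < L/2`, `0` otherwise, by the generalized exponential function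
`t ↦ A · exp (−(|t|/α)^β)` is strictly smaller than that by the scaled Gaussian
`t ↦ A · exp (−t²/α²)`. -/
theorem gef_beats_gaussian_on_square_wave
    (A L α : ℝ) (hA : 0 < A) (hL : 0 < L) (hα : 0 < α) :
    ∃ β : ℝ, 0 < β ∧
      (∫ t : ℝ, |(if |t| < L / 2 then A else 0) - A * Real.exp (-((|t| / α) ^ β))|) <
      (∫ t : ℝ, |(if |t| < L / 2 then A else 0) - A * Real.exp (-(t ^ 2 / α ^ 2))|) :=
  gef_beats_gaussian_on_square_wave_general A L α hA hα
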